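/- Let q be a prime power, m ≥ 1, and let B be an F_q-basis of F_{q^m} with dual basis B*. For every linear code C ⊆ F_{q^m}^n, Dual(Exp_B(C)) = Exp_{B*}(Dual(C)), where the dual on the left is taken over F_q in F_q^{mn} and the dual on the right is taken over F_{q^m} in F_{q^m}^n. -/
import Mathlib


open Module

/-- Expansion of a vector over a basis `B` of `F` over `K`: the entry of index `(i, j)`
is the `j`-th coordinate of `c i` in the basis `B`. -/
noncomputable def expVec {K F : Type*} [Field K] [Field F] [Algebra K F] {m : ℕ}
    (B : Basis (Fin m) K F) {ι : Type*} (c : ι → F) : ι × Fin m → K :=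
  fun p => B.repr (c p.1) p.2

/-- The dual of a code: all vectors orthogonal (for the standard bilinear form)
to every codeword. -/
def dualCode {R : Type*} [CommRing R] {ι : Type*} [Fintype ι] (C : Set (ι → R)) :
    Set (ι → R) :=
  {x | ∀ c ∈ C, ∑ i, x i * c i = 0}

/-- `Dual(Exp_B(C)) = Exp_{B*}(Dual(C))`, where `B*` is the trace-dual
basis of `B` (the dual on the left is over `F_q` in `F_q^{mn}`, the one on the right
over `F_{q^m}` in `F_{q^m}^n`). -/
theorem stmt_9 {K F : Type*} [Field K] [Fintype K] [Field F] [Algebra K F]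
    {q m n : ℕ} (hq : Fintype.card K = q) (hm1 : 1 ≤ m)
    (B Bd : Basis (Fin m) K F)
    (hdual : ∀ i j, (∑ t : Fin m, (B i * Bd j) ^ q ^ (t : ℕ)) =
      (if i = j then (1 : F) else 0))
    (C : Submodule F (Fin n → F)) :
    dualCode (expVec B '' (C : Set (Fin n → F))) =
      expVec Bd '' dualCode (C : Set (Fin n → F)) := by
  classical
  subst hq
  set q := Fintype.card K with hq
  -- characteristic setup
  set p := ringChar K with hpdef
  have hp : p.Prime := CharP.char_is_prime K p
  haveI : Fact p.Prime := ⟨hp⟩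
  haveI hFp : CharP F p := charP_of_injective_algebraMap (algebraMap K F).injective p
  haveI : ExpChar F p := ExpChar.prime hp
  obtain ⟨s, -, hs⟩ := FiniteField.card K p
  have hinj : Function.Injective (algebraMap K F) := (algebraMap K F).injective
  -- x ^ q ^ t is a Frobenius iterate
  have hpow : ∀ (t : ℕ) (x : F), x ^ q ^ t = iterateFrobenius F p ((s : ℕ) * t) x := by
    intro t x
    rw [iterateFrobenius_def, pow_mul, ← hs]
  -- additivity of x ↦ x ^ q ^ t
  have hadd : ∀ {ι : Type} (A : Finset ι) (f : ι → F) (t : ℕ),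
      (∑ i ∈ A, f i) ^ q ^ t = ∑ i ∈ A, f i ^ q ^ t := by
    intro ι A f t
    simp only [hpow t]
    exact map_sum (iterateFrobenius F p ((s : ℕ) * t)) f A
  -- scalars are fixed
  have hscal : ∀ (c : K) (t : ℕ) (x : F), (c • x) ^ q ^ t = c • x ^ q ^ t := by
    intro c t x
    rw [Algebra.smul_def, mul_pow, ← map_pow, FiniteField.pow_card_pow, Algebra.smul_def]
  -- key bilinear identity
  have key : ∀ u v : F, (∑ t : Fin m, (u * v) ^ q ^ (t : ℕ)) =
      algebraMap K F (∑ j, Bd.repr u j * B.repr v j) := by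
    intro u v
    have expand : ∀ t : ℕ, (u * v) ^ q ^ t =
        ∑ j, ∑ k, (Bd.repr u j * B.repr v k) • ((B k * Bd j) ^ q ^ t) := by
      intro t
      conv_lhs => rw [← Basis.sum_repr Bd u, ← Basis.sum_repr B v, Finset.sum_mul_sum]
      rw [hadd]
      refine Finset.sum_congr rfl fun j _ => ?_
      rw [hadd]
      refine Finset.sum_congr rfl fun k _ => ?_
      rw [smul_mul_smul_comm, mul_comm (Bd j) (B k), hscal]
    calc (∑ t : Fin m, (u * v) ^ q ^ (t : ℕ))
        = ∑ t : Fin m, ∑ j, ∑ k, (Bd.repr u j * B.repr v k) • ((B k * Bd j) ^ q ^ (t : ℕ)) :=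
          Finset.sum_congr rfl fun t _ => expand (t : ℕ)
      _ = ∑ j, ∑ k, (Bd.repr u j * B.repr v k) • (∑ t : Fin m, (B k * Bd j) ^ q ^ (t : ℕ)) := by
          rw [Finset.sum_comm]
          refine Finset.sum_congr rfl fun j _ => ?_
          rw [Finset.sum_comm]
          refine Finset.sum_congr rfl fun k _ => ?_
          rw [Finset.smul_sum]
      _ = ∑ j, ∑ k, (Bd.repr u j * B.repr v k) • (if k = j then (1 : F) else 0) := by
          simp only [hdual]
      _ = algebraMap K F (∑ j, Bd.repr u j * B.repr v j) := by
          rw [map_sum]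
          refine Finset.sum_congr rfl fun j _ => ?_
          simp [smul_ite, Algebra.algebraMap_eq_smul_one]
  -- prove the set equality
  ext y
  simp only [dualCode, Set.mem_setOf_eq, Set.mem_image]
  constructor
  · intro hy
    set x : Fin n → F := fun i => ∑ j, y (i, j) • Bd j with hxdef
    have hrep : ∀ i j, Bd.repr (x i) j = y (i, j) := by
      intro i j
      simp [hxdef, Finsupp.single_apply]
    refine ⟨x, ?_, ?_⟩
    · -- x is in the dual code of C
      intro c hc
      refine Basis.ext_elem B fun k => ?_
      rw [map_zero, Finsupp.coe_zero, Pi.zero_apply]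
      have hck : (Bd k) • c ∈ (C : Set (Fin n → F)) := C.smul_mem (Bd k) hc
      have h0 := hy _ ⟨_, hck, rfl⟩
      apply hinj
      rw [map_zero]
      calc algebraMap K F (B.repr (∑ i, x i * c i) k)
          = algebraMap K F (∑ j, Bd.repr (Bd k) j * B.repr (∑ i, x i * c i) j) := by
            congr 1
            rw [Finset.sum_eq_single k]
            · simp [Basis.repr_self_apply]
            · intro b _ hb
              simp only [Basis.repr_self_apply, if_neg (Ne.symm hb), zero_mul]
            · intro h; exact absurd (Finset.mem_univ k) h
        _ = ∑ t : Fin m, (Bd k * ∑ i, x i * c i) ^ q ^ (t : ℕ) := (key _ _).symm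
        _ = ∑ t : Fin m, (∑ i, x i * (Bd k • c) i) ^ q ^ (t : ℕ) := by
            refine Finset.sum_congr rfl fun t _ => ?_
            congr 1
            rw [Finset.mul_sum]
            refine Finset.sum_congr rfl fun i _ => ?_
            simp [Pi.smul_apply, Algebra.smul_def]
            ring
        _ = ∑ t : Fin m, ∑ i, (x i * (Bd k • c) i) ^ q ^ (t : ℕ) :=
            Finset.sum_congr rfl fun t _ => hadd _ _ _
        _ = ∑ i, ∑ t : Fin m, (x i * (Bd k • c) i) ^ q ^ (t : ℕ) := Finset.sum_comm
        _ = ∑ i, algebraMap K F (∑ j, Bd.repr (x i) j * B.repr ((Bd k • c) i) j) :=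
            Finset.sum_congr rfl fun i _ => key _ _
        _ = algebraMap K F (∑ i, ∑ j, y (i, j) * B.repr ((Bd k • c) i) j) := by
            rw [map_sum]
            refine Finset.sum_congr rfl fun i _ => ?_
            congr 1
            exact Finset.sum_congr rfl fun j _ => by rw [hrep]
        _ = algebraMap K F (∑ pr : Fin n × Fin m, y pr * expVec B (Bd k • c) pr) := by
            rw [Fintype.sum_prod_type]
            rfl
        _ = 0 := by rw [h0, map_zero]
    · -- expVec Bd x = y
      funext pr
      show Bd.repr (x pr.1) pr.2 = y pr
      rw [hrep]
  · rintro ⟨x, hx, rfl⟩ c' ⟨c, hc, rfl⟩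
    apply hinj
    rw [map_zero]
    calc algebraMap K F (∑ pr : Fin n × Fin m, expVec Bd x pr * expVec B c pr)
        = ∑ i, algebraMap K F (∑ j, Bd.repr (x i) j * B.repr (c i) j) := by
          rw [Fintype.sum_prod_type, map_sum]
          rfl
      _ = ∑ i, ∑ t : Fin m, (x i * c i) ^ q ^ (t : ℕ) :=
          Finset.sum_congr rfl fun i _ => (key _ _).symm
      _ = ∑ t : Fin m, ∑ i, (x i * c i) ^ q ^ (t : ℕ) := Finset.sum_comm
      _ = ∑ t : Fin m, (∑ i, x i * c i) ^ q ^ (t : ℕ) :=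
          Finset.sum_congr rfl fun t _ => (hadd _ _ _).symm
      _ = 0 := by
          rw [hx c hc]
          have hq1 : 1 ≤ q := Fintype.card_pos
          refine Finset.sum_eq_zero fun t _ => ?_
          exact zero_pow (by positivity)
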